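/- arXiv:2510.17638 — 2 statements merged into one kernel-verified Lean document; each statement's English description precedes it below -/
import Mathlib

section
/- Let (Ω, F, μ) be a probability space and let o, p, q : Ω → ℝ be measurable functions, with o taking values in {0,1} and p, q taking values in [0,1]. Assume: (i) calibration–sufficiency: for every Borel set S ⊆ ℝ × ℝ, ∫_{{ω : (p ω, q ω) ∈ S}} o dμ = ∫_{{ω : (p ω, q ω) ∈ S}} p dμ; (ii) symmetric disagreement: the pushforward law of d := p − q under μ equals the pushforward law of −d; (iii) μ{ω : p ω > q ω} > 0. Then μ{p > q} = μ{p < q} > 0 and the conditional expected return on Yes bets equals the conditional expected return on No bets: (∫_{{p > q}} (o − q) dμ) / μ{p > q} = (∫_{{p < q}} (q − o) dμ) / μ{p < q}. -/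
open MeasureTheory

/-- For a perfectly calibrated and sufficient forecaster `p` against a market price `q`
with outcome `o`, whose disagreement `p - q` is symmetric in law, and which disagrees
positively with positive probability, the probabilities of the Yes-bet and No-bet
events coincide and the conditional expected return on Yes bets equals the conditional
expected return on No bets. -/
theorem calibrated_symmetric_balanced_returns
    {Ω : Type*} [MeasurableSpace Ω] (μ : Measure Ω) [IsProbabilityMeasure μ]
    (o p q : Ω → ℝ)
    (ho : Measurable o) (hp : Measurable p) (hq : Measurable q)
    (ho01 : ∀ ω, o ω = 0 ∨ o ω = 1)
    (hp01 : ∀ ω, p ω ∈ Set.Icc (0 : ℝ) 1)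
    (hq01 : ∀ ω, q ω ∈ Set.Icc (0 : ℝ) 1)
    (hcal : ∀ S : Set (ℝ × ℝ), MeasurableSet S →
      ∫ ω in {ω | (p ω, q ω) ∈ S}, o ω ∂μ = ∫ ω in {ω | (p ω, q ω) ∈ S}, p ω ∂μ)
    (hsym : μ.map (fun ω => p ω - q ω) = μ.map (fun ω => -(p ω - q ω)))
    (hpos : 0 < μ {ω | q ω < p ω}) :
    μ {ω | q ω < p ω} = μ {ω | p ω < q ω} ∧
    0 < μ {ω | p ω < q ω} ∧
    (∫ ω in {ω | q ω < p ω}, (o ω - q ω) ∂μ) / (μ {ω | q ω < p ω}).toReal =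
      (∫ ω in {ω | p ω < q ω}, (q ω - o ω) ∂μ) / (μ {ω | p ω < q ω}).toReal := by
  have hd : Measurable (fun ω => p ω - q ω) := hp.sub hq
  have hnd : Measurable (fun ω => -(p ω - q ω)) := hd.neg
  -- equality of measures
  have hpre1 : (fun ω => p ω - q ω) ⁻¹' Set.Ioi 0 = {ω | q ω < p ω} := by
    ext ω; simp [sub_pos]
  have hpre2 : (fun ω => -(p ω - q ω)) ⁻¹' Set.Ioi 0 = {ω | p ω < q ω} := by
    ext ω; simp [sub_pos]
  have hmeas : μ {ω | q ω < p ω} = μ {ω | p ω < q ω} := by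
    have h1 := Measure.map_apply (μ := μ) hd (measurableSet_Ioi (a := (0:ℝ)))
    have h2 := Measure.map_apply (μ := μ) hnd (measurableSet_Ioi (a := (0:ℝ)))
    rw [hpre1] at h1; rw [hpre2] at h2
    rw [← h1, ← h2, hsym]
  refine ⟨hmeas, hmeas ▸ hpos, ?_⟩
  -- integrability
  have hio : Integrable o μ := by
    refine (integrable_const (1:ℝ)).mono' ho.aestronglyMeasurable (ae_of_all _ fun ω => ?_)
    rcases ho01 ω with h | h <;> simp [h]
  have hip : Integrable p μ := by
    refine (integrable_const (1:ℝ)).mono' hp.aestronglyMeasurable (ae_of_all _ fun ω => ?_)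
    rcases hp01 ω with ⟨h0, h1⟩; rw [Real.norm_eq_abs, abs_of_nonneg h0]; exact h1
  have hiq : Integrable q μ := by
    refine (integrable_const (1:ℝ)).mono' hq.aestronglyMeasurable (ae_of_all _ fun ω => ?_)
    rcases hq01 ω with ⟨h0, h1⟩; rw [Real.norm_eq_abs, abs_of_nonneg h0]; exact h1
  have hsY : MeasurableSet {ω | q ω < p ω} := measurableSet_lt hq hp
  have hsN : MeasurableSet {ω | p ω < q ω} := measurableSet_lt hp hq
  -- calibration on each set
  have hS1 : MeasurableSet {xy : ℝ × ℝ | xy.2 < xy.1} :=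
    measurableSet_lt measurable_snd measurable_fst
  have hS2 : MeasurableSet {xy : ℝ × ℝ | xy.1 < xy.2} :=
    measurableSet_lt measurable_fst measurable_snd
  have hcal1 : ∫ ω in {ω | q ω < p ω}, o ω ∂μ = ∫ ω in {ω | q ω < p ω}, p ω ∂μ := by
    have := hcal _ hS1
    simpa using this
  have hcal2 : ∫ ω in {ω | p ω < q ω}, o ω ∂μ = ∫ ω in {ω | p ω < q ω}, p ω ∂μ := by
    have := hcal _ hS2
    simpa using this
  -- symmetric law gives equal d-integrals
  have hdint : ∫ ω in {ω | q ω < p ω}, (p ω - q ω) ∂μ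
      = ∫ ω in {ω | p ω < q ω}, (q ω - p ω) ∂μ := by
    have h1 : ∫ x in Set.Ioi (0:ℝ), x ∂(μ.map (fun ω => p ω - q ω))
        = ∫ ω in {ω | q ω < p ω}, (p ω - q ω) ∂μ := by
      rw [setIntegral_map (f := fun x : ℝ => x) measurableSet_Ioi
        measurable_id.aestronglyMeasurable hd.aemeasurable, hpre1]
    have h2 : ∫ x in Set.Ioi (0:ℝ), x ∂(μ.map (fun ω => -(p ω - q ω)))
        = ∫ ω in {ω | p ω < q ω}, (q ω - p ω) ∂μ := by
      rw [setIntegral_map (f := fun x : ℝ => x) measurableSet_Ioi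
        measurable_id.aestronglyMeasurable hnd.aemeasurable, hpre2]
      simp
    rw [← h1, ← h2, hsym]
  -- rewrite numerators
  have hnum1 : ∫ ω in {ω | q ω < p ω}, (o ω - q ω) ∂μ
      = ∫ ω in {ω | q ω < p ω}, (p ω - q ω) ∂μ := by
    rw [integral_sub (hio.restrict) (hiq.restrict),
      integral_sub (hip.restrict) (hiq.restrict), hcal1]
  have hnum2 : ∫ ω in {ω | p ω < q ω}, (q ω - o ω) ∂μ
      = ∫ ω in {ω | p ω < q ω}, (q ω - p ω) ∂μ := by
    rw [integral_sub (hiq.restrict) (hio.restrict),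
      integral_sub (hiq.restrict) (hip.restrict), hcal2]
  rw [hnum1, hnum2, hdint, hmeas]
end

section
/- There exist a ground-truth probability p*, a market price q, and two forecasts p_A, p_B ∈ (0,1) — namely p* = 3/5, q = 1/2, p_A = 9/20, p_B = 9/10 — such that forecaster A has a strictly better (smaller) expected Brier score but a strictly smaller expected market return than forecaster B. Precisely, with o a Bernoulli(p*) random variable: (a) E[(p_A − o)²] = 21/80 < 33/100 = E[(p_B − o)²]; (b) since p_A < q, A bets on No (selling a Yes contract at price q), with expected net profit E[q − o] = q − p* = −1/10, while since p_B > q, B buys a Yes contract at price q, with expected net profit E[o − q] = p* − q = 1/10; hence A's expected return −1/10 is strictly less than B's expected return 1/10. -/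
open MeasureTheory

/-- There exist a ground truth `p* = 3/5`, a market price `q = 1/2`, and forecasts
`p_A = 9/20`, `p_B = 9/10` such that, for any Bernoulli(`p*`) outcome `o`, forecaster
A has strictly smaller expected Brier score than B, yet strictly smaller expected
market return: A bets No (since `p_A < q`) with expected net profit `q - p* = -1/10`,
while B buys Yes (since `p_B > q`) with expected net profit `p* - q = 1/10`. -/
theorem brier_and_return_rank_oppositely :
    ∃ pstar q pA pB : ℝ,
      pstar = 3/5 ∧ q = 1/2 ∧ pA = 9/20 ∧ pB = 9/10 ∧
      pA ∈ Set.Ioo (0 : ℝ) 1 ∧ pB ∈ Set.Ioo (0 : ℝ) 1 ∧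
      pA < q ∧ q < pB ∧
      ∀ (Ω : Type) (_ : MeasurableSpace Ω) (μ : Measure Ω),
        IsProbabilityMeasure μ →
        ∀ o : Ω → ℝ, Measurable o → (∀ ω, o ω = 0 ∨ o ω = 1) →
        μ {ω | o ω = 1} = ENNReal.ofReal pstar →
        ((∫ ω, (pA - o ω) ^ 2 ∂μ) = 21/80 ∧
         (∫ ω, (pB - o ω) ^ 2 ∂μ) = 33/100 ∧
         (21/80 : ℝ) < 33/100 ∧
         (∫ ω, (q - o ω) ∂μ) = q - pstar ∧ q - pstar = -(1/10) ∧
         (∫ ω, (o ω - q) ∂μ) = pstar - q ∧ pstar - q = 1/10 ∧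
         (-(1/10) : ℝ) < 1/10) := by
  refine ⟨3/5, 1/2, 9/20, 9/10, rfl, rfl, rfl, rfl, ⟨by norm_num, by norm_num⟩,
    ⟨by norm_num, by norm_num⟩, by norm_num, by norm_num, ?_⟩
  intro Ω _ μ hμ o hmeas hval hprob
  have hs : MeasurableSet {ω | o ω = 1} := hmeas (measurableSet_singleton 1)
  have hind : ∀ ω, o ω = Set.indicator {ω | o ω = 1} (fun _ => (1:ℝ)) ω := by
    intro ω
    rcases hval ω with h | h
    · rw [Set.indicator_of_notMem (by simp [Set.mem_setOf_eq, h])]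
      exact h
    · rw [Set.indicator_of_mem (by simpa [Set.mem_setOf_eq] using h)]
      exact h
  have hint : Integrable o μ := by
    rw [funext hind]
    exact (integrable_const (1:ℝ)).indicator hs
  have hio : (∫ ω, o ω ∂μ) = 3/5 := by
    rw [funext hind, integral_indicator_const _ hs, measureReal_def, hprob, smul_eq_mul,
      ENNReal.toReal_ofReal (by norm_num)]
    norm_num
  have hsq : ∀ ω, (o ω) ^ 2 = o ω := by
    intro ω; rcases hval ω with h | h <;> rw [h] <;> norm_num
  have key : ∀ a : ℝ, (∫ ω, (a - o ω) ^ 2 ∂μ) = a ^ 2 + (1 - 2 * a) * (3/5) := by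
    intro a
    have heq : ∀ ω, (a - o ω) ^ 2 = a ^ 2 + (1 - 2 * a) * o ω := by
      intro ω; have := hsq ω; ring_nf; nlinarith [hsq ω]
    rw [funext heq, integral_add (integrable_const _) (hint.const_mul _),
      integral_const, MeasureTheory.integral_const_mul, hio]
    simp
  have hqo : (∫ ω, (1/2 - o ω) ∂μ) = 1/2 - 3/5 := by
    rw [integral_sub (integrable_const _) hint, integral_const, hio]; simp
  have hoq : (∫ ω, (o ω - 1/2) ∂μ) = 3/5 - 1/2 := by
    rw [integral_sub hint (integrable_const _), integral_const, hio]; simp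
  refine ⟨by rw [key]; norm_num, by rw [key]; norm_num, by norm_num,
    by rw [hqo], by norm_num, by rw [hoq], by norm_num, by norm_num⟩
end
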